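/- arXiv:2505.08506 — 6 statements merged into one kernel-verified Lean document; each statement's English description precedes it below -/
import Mathlib

section
/- Let q ∈ {2,3} and s ≥ 2. Then there exists an invertible matrix Y ∈ GL_s(F_q) such that Y·Y^T − I_s is invertible. -/
/-!
If `Y = diag(A, B)` then `Y * Yᵀ - 1 = diag(A * Aᵀ - 1, B * Bᵀ - 1)`, so invertibility of both
`Y` and `Y * Yᵀ - 1` is stable under block sums, and every `s ≥ 2` is a sum of 2s and 3s. In
sizes 2 and 3 the unipotent matrix `Y = 1 + N`, with `N` the superdiagonal shift, works over
every commutative ring: `det Y = 1` and `det (Y * Yᵀ - 1) = -1`.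
-/

open Matrix

namespace Matrix

variable {R : Type*} [CommRing R]

section Blocks

variable {m n : Type*} [Fintype m] [Fintype n] [DecidableEq m] [DecidableEq n]

theorem fromBlocks_diag_mul_transpose_sub_one (A : Matrix m m R) (B : Matrix n n R) :
    fromBlocks A 0 0 B * (fromBlocks A 0 0 B)ᵀ - 1 =
      fromBlocks (A * Aᵀ - 1) 0 0 (B * Bᵀ - 1) := by
  rw [← fromBlocks_one, sub_eq_add_neg, sub_eq_add_neg, sub_eq_add_neg, fromBlocks_neg]
  simp [fromBlocks_transpose, fromBlocks_multiply, fromBlocks_add]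

theorem reindex_mul_transpose_sub_one (e : m ≃ n) (A : Matrix m m R) :
    reindex e e A * (reindex e e A)ᵀ - 1 = reindex e e (A * Aᵀ - 1) := by
  rw [transpose_reindex, ← coe_reindexAlgEquiv R R]
  simp only [map_sub, map_mul, map_one]

end Blocks

theorem isUnit_unipotent_fin_two :
    IsUnit !![(1 : R), 1; 0, 1] ∧ IsUnit (!![(1 : R), 1; 0, 1] * !![(1 : R), 1; 0, 1]ᵀ - 1) := by
  have hgram : !![(1 : R), 1; 0, 1] * !![(1 : R), 1; 0, 1]ᵀ - 1 = !![1, 1; 1, 0] := by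
    ext i j
    fin_cases i <;> fin_cases j <;> simp [vecMul, dotProduct, Fin.sum_univ_succ]
  rw [hgram]
  simp [isUnit_iff_isUnit_det, det_fin_two_of]

theorem isUnit_unipotent_fin_three :
    IsUnit !![(1 : R), 1, 0; 0, 1, 1; 0, 0, 1] ∧
      IsUnit (!![(1 : R), 1, 0; 0, 1, 1; 0, 0, 1] * !![(1 : R), 1, 0; 0, 1, 1; 0, 0, 1]ᵀ - 1) := by
  have hgram : !![(1 : R), 1, 0; 0, 1, 1; 0, 0, 1] * !![(1 : R), 1, 0; 0, 1, 1; 0, 0, 1]ᵀ - 1 =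
      !![1, 1, 0; 1, 1, 1; 0, 1, 0] := by
    ext i j
    fin_cases i <;> fin_cases j <;> simp [vecMul, dotProduct, Fin.sum_univ_succ]
  rw [hgram]
  simp [isUnit_iff_isUnit_det, det_fin_three]

theorem exists_isUnit_and_isUnit_mul_transpose_sub_one :
    ∀ n : ℕ, ∃ Y : Matrix (Fin (n + 2)) (Fin (n + 2)) R, IsUnit Y ∧ IsUnit (Y * Yᵀ - 1)
  | 0 => ⟨_, isUnit_unipotent_fin_two⟩
  | 1 => ⟨_, isUnit_unipotent_fin_three⟩
  | n + 2 => by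
    obtain ⟨A, hA, hAgram⟩ := exists_isUnit_and_isUnit_mul_transpose_sub_one n
    obtain ⟨hB, hBgram⟩ := isUnit_unipotent_fin_two (R := R)
    let e := reindexAlgEquiv R R (finSumFinEquiv (m := n + 2) (n := 2))
    refine ⟨e (fromBlocks A 0 0 !![1, 1; 0, 1]), (isUnit_fromBlocks_zero₂₁.2 ⟨hA, hB⟩).map e, ?_⟩
    rw [coe_reindexAlgEquiv, reindex_mul_transpose_sub_one, fromBlocks_diag_mul_transpose_sub_one,
      ← coe_reindexAlgEquiv R R]
    exact (isUnit_fromBlocks_zero₂₁.2 ⟨hAgram, hBgram⟩).map _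

end Matrix

theorem exists_Y_isUnit_mul_transpose_sub_one_general {F : Type*} [Field F] {s : ℕ} (hs : 2 ≤ s) :
    ∃ Y : Matrix (Fin s) (Fin s) F, IsUnit Y ∧ IsUnit (Y * Yᵀ - 1) := by
  obtain ⟨n, rfl⟩ := Nat.exists_eq_add_of_le' hs
  exact exists_isUnit_and_isUnit_mul_transpose_sub_one n

theorem exists_Y_isUnit_mul_transpose_sub_one {F : Type*} [Field F] [Fintype F]
    (hq : Fintype.card F = 2 ∨ Fintype.card F = 3) {s : ℕ} (hs : 2 ≤ s) :
    ∃ Y : Matrix (Fin s) (Fin s) F, IsUnit Y ∧ IsUnit (Y * Yᵀ - 1) :=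
  exists_Y_isUnit_mul_transpose_sub_one_general hs
end

section
/- Let C be a k-dimensional linear subspace of F^n (F a field equipped with an involutive-free standard bilinear form ⟨u,v⟩ = Σ u_i v_i) with generator matrix G ∈ F^{k×n} whose rows form a basis of C. Then dim(C ∩ C^⊥) = k − rank(G·G^T), where C^⊥ = {v ∈ F^n : ⟨v,w⟩ = 0 for all w ∈ C}. -/
/-! Since the rows of `G` are independent, `x ↦ x ᵥ* G` is an isomorphism `F^k ≃ C`,
and `x ᵥ* G ⊥ C` iff `G *ᵥ (x ᵥ* G) = (G * Gᵀ) *ᵥ x = 0`. So the hull is the isomorphic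
image of `ker (G * Gᵀ)`, whose dimension is `k - rank (G * Gᵀ)` by rank–nullity. -/

open Matrix

/-- The dual code of a subspace of `Fin n → F` with respect to the standard
bilinear form `⟨v, w⟩ = ∑ i, v i * w i`. -/
def dualCode {F : Type*} [CommRing F] {n : ℕ} (C : Submodule F (Fin n → F)) :
    Submodule F (Fin n → F) where
  carrier := {v | ∀ w ∈ C, v ⬝ᵥ w = 0}
  add_mem' := by
    intro a b ha hb w hw
    simp [add_dotProduct, ha w hw, hb w hw]
  zero_mem' := by
    intro w hw
    simp
  smul_mem' := by
    intro c a ha w hw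
    simp [smul_dotProduct, ha w hw]

theorem LinearMap.finrank_range_inf_eq_finrank_comap {K V W : Type*} [DivisionRing K]
    [AddCommGroup V] [Module K V] [AddCommGroup W] [Module K W] {f : V →ₗ[K] W}
    (hf : Function.Injective f) (q : Submodule K W) :
    Module.finrank K ↥(LinearMap.range f ⊓ q) = Module.finrank K (q.comap f) := by
  rw [← Submodule.map_comap_eq]
  exact (Submodule.equivMapOfInjective f hf _).finrank_eq.symm

section

variable {F : Type*} {n : ℕ}

theorem mem_dualCode_span_iff [CommRing F] {s : Set (Fin n → F)} {v : Fin n → F} :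
    v ∈ dualCode (Submodule.span F s) ↔ ∀ w ∈ s, v ⬝ᵥ w = 0 :=
  ⟨fun h w hw => h w (Submodule.subset_span hw),
    fun h _ hw => (Submodule.span_le (p := LinearMap.ker (dotProductBilin F F v))).2 h hw⟩

theorem mem_dualCode_span_range_iff [CommRing F] {ι : Type*} (G : Matrix ι (Fin n) F)
    (v : Fin n → F) : v ∈ dualCode (Submodule.span F (Set.range G)) ↔ G *ᵥ v = 0 := by
  rw [mem_dualCode_span_iff]
  exact ⟨fun h => funext fun i => (dotProduct_comm _ _).trans (h _ ⟨i, rfl⟩),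
    fun h _ ⟨i, hi⟩ => hi ▸ (dotProduct_comm _ _).trans (congrFun h i)⟩

theorem comap_vecMulLinear_dualCode_span_range [CommRing F] {ι : Type*} [Fintype ι]
    (G : Matrix ι (Fin n) F) :
    (dualCode (Submodule.span F (Set.range G))).comap G.vecMulLinear =
      LinearMap.ker (G * Gᵀ).mulVecLin := by
  ext x
  simp [mem_dualCode_span_range_iff, ← mulVec_transpose, mulVec_mulVec]

theorem finrank_span_range_inf_dualCode [Field F] {ι : Type*} [Fintype ι]
    {G : Matrix ι (Fin n) F} (hG : LinearIndependent F G) :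
    Module.finrank F
        ↥(Submodule.span F (Set.range G) ⊓ dualCode (Submodule.span F (Set.range G))) =
      Module.finrank F (LinearMap.ker (G * Gᵀ).mulVecLin) := by
  rw [← comap_vecMulLinear_dualCode_span_range,
    ← LinearMap.finrank_range_inf_eq_finrank_comap (vecMul_injective_iff.2 hG),
    range_vecMulLinear]
  rfl

theorem Matrix.rank_add_finrank_ker_mulVecLin [Field F] {m ι : Type*} [Fintype ι]
    (A : Matrix m ι F) :
    A.rank + Module.finrank F (LinearMap.ker A.mulVecLin) = Fintype.card ι := by
  rw [rank, LinearMap.finrank_range_add_finrank_ker, Module.finrank_fintype_fun_eq_card]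

end

/-- Lemma 2.5: if the rows of `G` form a basis of the code `C`, then the hull
`C ∩ C^⊥` has dimension `k - rank (G * Gᵀ)`. -/
theorem hull_finrank_eq {F : Type*} [Field F] {k n : ℕ}
    (G : Matrix (Fin k) (Fin n) F) (C : Submodule F (Fin n → F))
    (hspan : C = Submodule.span F (Set.range G)) (hli : LinearIndependent F G) :
    Module.finrank F ↥(C ⊓ dualCode C) = k - (G * Gᵀ).rank := by
  have hrank := Matrix.rank_add_finrank_ker_mulVecLin (G * Gᵀ)
  rw [Fintype.card_fin] at hrank
  rw [hspan, finrank_span_range_inf_dualCode hli]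
  omega
end

section
/- Let F be a field, h ≤ k ≤ n, A ∈ F^{h×(n−h)}, B ∈ F^{(k−h)×(n−h)} with A·A^T = −I_h, A·B^T = 0, and rank(B·B^T) = k − h. Let 0 ≤ ℓ ≤ h and suppose Y ∈ GL_{h−ℓ}(F) satisfies that Y·Y^T − I_{h−ℓ} is invertible. Set X = diag(Y, I_ℓ) ∈ GL_h(F), M = diag(X, I_{n−h}) ∈ GL_n(F), and G' = [I_h A; 0 B]·M. Then rank(G'·G'^T) = k − ℓ. -/
/-!
Because `A * Bᵀ = 0`, the Gram matrix of `G * M = [X A; 0 B]` is block diagonal with blocks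
`X * Xᵀ + A * Aᵀ` and `B * Bᵀ`, and rank is additive over diagonal blocks. Since `A * Aᵀ = -1`,
the first block is `diag(Y * Yᵀ - 1, 0_ℓ)`, of rank `h - ℓ` as `Y * Yᵀ - 1` is invertible;
the second has rank `k - h`.
-/

open Matrix

theorem Submodule.finrank_prod {K V W : Type*} [DivisionRing K] [AddCommGroup V] [Module K V]
    [AddCommGroup W] [Module K W] (p : Submodule K V) (q : Submodule K W)
    [FiniteDimensional K p] [FiniteDimensional K q] :
    Module.finrank K (p.prod q) = Module.finrank K p + Module.finrank K q := by
  have hdisj : p.map (LinearMap.inl K V W) ⊓ q.map (LinearMap.inr K V W) = ⊥ :=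
    disjoint_iff.mp (LinearMap.disjoint_inl_inr.mono LinearMap.map_le_range LinearMap.map_le_range)
  have := finrank_sup_add_finrank_inf_eq (p.map (LinearMap.inl K V W)) (q.map (LinearMap.inr K V W))
  rwa [hdisj, finrank_bot, add_zero, ← LinearMap.prod_eq_sup_map,
    ← (equivMapOfInjective _ LinearMap.inl_injective p).finrank_eq,
    ← (equivMapOfInjective _ LinearMap.inr_injective q).finrank_eq] at this

namespace Matrix

theorem mulVecLin_fromBlocks_zero_zero {R m n o p : Type*} [CommSemiring R]
    [Fintype n] [Fintype p] (A : Matrix m n R) (D : Matrix o p R) :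
    (fromBlocks A 0 0 D).mulVecLin =
      (LinearEquiv.sumArrowLequivProdArrow m o R R).symm.toLinearMap ∘ₗ
        (A.mulVecLin.prodMap D.mulVecLin) ∘ₗ
          (LinearEquiv.sumArrowLequivProdArrow n p R R).toLinearMap := by
  ext v (i | i) <;> simp [fromBlocks_mulVec] <;> rfl

theorem rank_fromBlocks_zero_zero {K m n o p : Type*} [Field K] [Fintype n] [Fintype p]
    (A : Matrix m n K) (D : Matrix o p K) :
    (fromBlocks A 0 0 D).rank = A.rank + D.rank := by
  rw [rank, mulVecLin_fromBlocks_zero_zero, LinearMap.range_comp, LinearEquiv.finrank_map_eq,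
    LinearMap.range_comp_of_range_eq_top _ (LinearEquiv.range _), LinearMap.range_prodMap,
    Submodule.finrank_prod]
  rfl

theorem fromBlocks_zero₂₁_mul_transpose_self {R l m n o : Type*} [CommSemiring R]
    [Fintype l] [Fintype m] (X : Matrix n l R) (A : Matrix n m R) (B : Matrix o m R)
    (hAB : A * Bᵀ = 0) :
    fromBlocks X A 0 B * (fromBlocks X A 0 B)ᵀ =
      fromBlocks (X * Xᵀ + A * Aᵀ) 0 0 (B * Bᵀ) := by
  have hBA : B * Aᵀ = 0 := by rw [← transpose_transpose B, ← transpose_mul, hAB, transpose_zero]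
  simp [fromBlocks_transpose, fromBlocks_multiply, hAB, hBA]

end Matrix

theorem rank_transformed_gram_general {F : Type*} [Field F] {t ℓ r p : ℕ}
    (A : Matrix (Fin t ⊕ Fin ℓ) (Fin p) F) (B : Matrix (Fin r) (Fin p) F)
    (Y : Matrix (Fin t) (Fin t) F) (hY' : IsUnit (Y * Yᵀ - 1))
    (hA : A * Aᵀ = -1) (hAB : A * Bᵀ = 0) (hB : (B * Bᵀ).rank = r)
    (G : Matrix ((Fin t ⊕ Fin ℓ) ⊕ Fin r) ((Fin t ⊕ Fin ℓ) ⊕ Fin p) F)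
    (X : Matrix (Fin t ⊕ Fin ℓ) (Fin t ⊕ Fin ℓ) F)
    (M : Matrix ((Fin t ⊕ Fin ℓ) ⊕ Fin p) ((Fin t ⊕ Fin ℓ) ⊕ Fin p) F)
    (hX : X = Matrix.fromBlocks Y 0 0 (1 : Matrix (Fin ℓ) (Fin ℓ) F))
    (hM : M = Matrix.fromBlocks X 0 0 (1 : Matrix (Fin p) (Fin p) F))
    (hG : G = Matrix.fromBlocks
        (1 : Matrix (Fin t ⊕ Fin ℓ) (Fin t ⊕ Fin ℓ) F) A 0 B) :
    ((G * M) * (G * M)ᵀ).rank = (t + ℓ + r) - ℓ := by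
  have hGM : G * M = fromBlocks X A 0 B := by
    simp [hG, hM, fromBlocks_multiply]
  have hcorner : X * Xᵀ + A * Aᵀ = fromBlocks (Y * Yᵀ - 1) 0 0 0 := by
    rw [hA, hX, fromBlocks_transpose, fromBlocks_multiply, ← fromBlocks_one, fromBlocks_neg,
      fromBlocks_add]
    simp [sub_eq_add_neg]
  rw [hGM, fromBlocks_zero₂₁_mul_transpose_self X A B hAB, hcorner, rank_fromBlocks_zero_zero,
    rank_fromBlocks_zero_zero, rank_of_isUnit _ hY', rank_zero, hB, Fintype.card_fin]
  omega

/-- The key rank computation of Theorem 3.4: here `h = t + ℓ` (so `t = h - ℓ`),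
`k = h + r` and `n = h + p`, `G = [I_h A; 0 B]`, `X = diag(Y, I_ℓ)`,
`M = diag(X, I_{n-h})` and `G' = G * M`; then `rank (G' * G'ᵀ) = k - ℓ`. -/
theorem rank_transformed_gram {F : Type*} [Field F] {t ℓ r p : ℕ}
    (A : Matrix (Fin t ⊕ Fin ℓ) (Fin p) F) (B : Matrix (Fin r) (Fin p) F)
    (Y : Matrix (Fin t) (Fin t) F) (hY : IsUnit Y) (hY' : IsUnit (Y * Yᵀ - 1))
    (hA : A * Aᵀ = -1) (hAB : A * Bᵀ = 0) (hB : (B * Bᵀ).rank = r)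
    (G : Matrix ((Fin t ⊕ Fin ℓ) ⊕ Fin r) ((Fin t ⊕ Fin ℓ) ⊕ Fin p) F)
    (X : Matrix (Fin t ⊕ Fin ℓ) (Fin t ⊕ Fin ℓ) F)
    (M : Matrix ((Fin t ⊕ Fin ℓ) ⊕ Fin p) ((Fin t ⊕ Fin ℓ) ⊕ Fin p) F)
    (hX : X = Matrix.fromBlocks Y 0 0 (1 : Matrix (Fin ℓ) (Fin ℓ) F))
    (hM : M = Matrix.fromBlocks X 0 0 (1 : Matrix (Fin p) (Fin p) F))
    (hG : G = Matrix.fromBlocks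
        (1 : Matrix (Fin t ⊕ Fin ℓ) (Fin t ⊕ Fin ℓ) F) A 0 B) :
    ((G * M) * (G * M)ᵀ).rank = (t + ℓ + r) - ℓ :=
  rank_transformed_gram_general A B Y hY' hA hAB hB G X M hX hM hG
end

section
/- Let q ∈ {2,3} and C ⊆ F_{q^m}^n a k-dimensional F_{q^m}-subspace with dim(C ∩ C^⊥) = h ≥ 2. Then for each ℓ ∈ {0,1,...,h−2} there exists A ∈ GL_n(F_q) such that C' = {vA : v ∈ C} satisfies dim(C' ∩ C'^⊥) = ℓ. -/
open Matrix

/-- Right multiplication by a matrix with entries in the subfield `Fq`,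
as a linear map on `Fin n → F`. -/
noncomputable def rightMulCode {Fq F : Type*} [Field Fq] [Field F] [Algebra Fq F]
    {n : ℕ} (A : Matrix (Fin n) (Fin n) Fq) :
    (Fin n → F) →ₗ[F] (Fin n → F) :=
  (A.map (algebraMap Fq F)).vecMulLinear

/-!
If `A Aᵀ = 1 + Vᵀ G V` with `G` invertible and `V` maps the hull of `C` onto `F^s`, then
`v ↦ v A` identifies the hull of `C A` with `{v ∈ hull C | V v = 0}`, so the hull dimension drops
by exactly `s`. Such `A` are built from a small invertible `B` placed on a few coordinates: for
`B = [[1,0],[1,1]]`, `B Bᵀ - 1` is invertible over every field (a drop by two), while in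
characteristic 2 or 3 some `3 × 3` matrix `B` has `B Bᵀ = 1 + wᵀ w` with `w` a single row (a drop
by one). Dropping by one until `h = ℓ + 2` and then by two reaches every `ℓ ≤ h - 2`.
-/

open Module

theorem Submodule.finrank_map_add_finrank_inf_ker {K V V₂ : Type*} [DivisionRing K]
    [AddCommGroup V] [Module K V] [AddCommGroup V₂] [Module K V₂] [FiniteDimensional K V]
    (W : Submodule K V) (f : V →ₗ[K] V₂) :
    finrank K (W.map f) + finrank K ↥(W ⊓ LinearMap.ker f) = finrank K W := by
  rw [← LinearMap.range_domRestrict, ← (f.domRestrict W).finrank_range_add_finrank_ker,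
    LinearMap.ker_domRestrict, ← top_inf_eq (Submodule.comap W.subtype _),
    ← Submodule.comap_subtype_self W, ← Submodule.comap_inf]
  exact congrArg _ (Submodule.comapSubtypeEquivOfLe inf_le_left).finrank_eq.symm

section Coordinates

variable {K : Type*} [Field K] {ι : Type*} [Fintype ι]

theorem Submodule.exists_ne_zero_forall_apply_eq_zero (W : Submodule K (ι → K)) (s : Finset ι)
    (hs : s.card < finrank K W) : ∃ x ∈ W, x ≠ 0 ∧ ∀ i ∈ s, x i = 0 := by
  let restrict : (ι → K) →ₗ[K] (s → K) := LinearMap.funLeft K K Subtype.val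
  have hker : LinearMap.ker (restrict.domRestrict W) ≠ ⊥ :=
    LinearMap.ker_ne_bot_of_finrank_lt (by simpa using hs)
  obtain ⟨⟨x, hxW⟩, hx, hx0⟩ := (Submodule.ne_bot_iff _).mp hker
  refine ⟨x, hxW, fun h => hx0 (by simp [h]), fun i hi => ?_⟩
  exact congrFun (LinearMap.mem_ker.mp hx) ⟨i, hi⟩

variable {n : ℕ}

theorem Submodule.exists_coord_pair_surjective (W : Submodule K (Fin n → K))
    (hW : 2 ≤ finrank K W) :
    ∃ ι : Fin 2 → Fin n, Function.Injective ι ∧ ∀ y : Fin 2 → K, ∃ x ∈ W, x ∘ ι = y := by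
  obtain ⟨x, hxW, hx0, -⟩ := W.exists_ne_zero_forall_apply_eq_zero ∅
    (by rw [Finset.card_empty]; omega)
  obtain ⟨b, hb : x b ≠ 0⟩ := Function.ne_iff.mp hx0
  obtain ⟨z, hzW, hz0, hzb⟩ := W.exists_ne_zero_forall_apply_eq_zero {b}
    (by rw [Finset.card_singleton]; omega)
  obtain ⟨a, ha : z a ≠ 0⟩ := Function.ne_iff.mp hz0
  have hab : a ≠ b := fun h => ha (by rw [h]; exact hzb b (by simp))
  refine ⟨![a, b], fun i j hij => ?_, fun y => ?_⟩
  · fin_cases i <;> fin_cases j <;> simp_all [eq_comm]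
  · have hzb' : z b = 0 := hzb b (by simp)
    let c := y 1 / x b
    refine ⟨c • x + ((y 0 - c * x a) / z a) • z, W.add_mem (W.smul_mem _ hxW) (W.smul_mem _ hzW),
      funext fun i => ?_⟩
    fin_cases i
    · simp only [Fin.zero_eta, Function.comp_apply, cons_val_zero, Pi.add_apply, Pi.smul_apply,
        smul_eq_mul, c]
      field_simp
      ring
    · simp [c, hzb', hb]

theorem Submodule.exists_coord_triple (W : Submodule K (Fin n → K)) (hW : 3 ≤ finrank K W) :
    ∃ ι : Fin 3 → Fin n, Function.Injective ι ∧
      ∃ x ∈ W, x (ι 0) ≠ 0 ∧ x (ι 1) = 0 ∧ x (ι 2) = 0 := by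
  have hn : 2 ≤ n := by
    have hWn := W.finrank_le
    rw [finrank_fin_fun] at hWn
    omega
  let a : Fin n := ⟨0, by omega⟩
  let b : Fin n := ⟨1, by omega⟩
  have hab : a ≠ b := by simp [a, b, Fin.ext_iff]
  obtain ⟨x, hxW, hx0, hx⟩ := W.exists_ne_zero_forall_apply_eq_zero {a, b}
    (by rw [Finset.card_pair hab]; omega)
  obtain ⟨k, hk : x k ≠ 0⟩ := Function.ne_iff.mp hx0
  have hka : k ≠ a := fun h => hk (by rw [h]; exact hx a (by simp))
  have hkb : k ≠ b := fun h => hk (by rw [h]; exact hx b (by simp))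
  refine ⟨![k, a, b], fun i j hij => ?_, x, hxW, hk, hx a (by simp), hx b (by simp)⟩
  fin_cases i <;> fin_cases j <;> simp_all [eq_comm]

end Coordinates

namespace Matrix

variable {K : Type*} [CommRing K] {m n : Type*} [Fintype n]

theorem vecMul_dotProduct_vecMul (v w : n → K) (P : Matrix n n K) :
    (v ᵥ* P) ⬝ᵥ (w ᵥ* P) = (v ᵥ* (P * Pᵀ)) ⬝ᵥ w := by
  rw [← mulVec_transpose P w, dotProduct_mulVec, vecMul_vecMul]

variable [DecidableEq n]

theorem vecMul_one_add_transpose_mul_mul [Fintype m] (V : Matrix m n K) (G : Matrix m m K)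
    (v : n → K) : v ᵥ* (1 + Vᵀ * G * V) = v + ((V *ᵥ v) ᵥ* G) ᵥ* V := by
  rw [vecMul_add, vecMul_one, ← vecMul_vecMul, ← vecMul_vecMul, vecMul_transpose]

theorem mul_transpose_submatrix_one [DecidableEq m] {ι : m → n} (hι : Function.Injective ι) :
    (1 : Matrix n n K).submatrix ι id * ((1 : Matrix n n K).submatrix ι id)ᵀ = 1 := by
  rw [transpose_submatrix, transpose_one, ← submatrix_mul _ _ _ _ _ Function.bijective_id,
    Matrix.mul_one, submatrix_one _ hι]

theorem submatrix_one_mulVec (ι : m → n) (x : n → K) :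
    (1 : Matrix n n K).submatrix ι id *ᵥ x = x ∘ ι := by
  rw [← Equiv.coe_refl, submatrix_mulVec_equiv, one_mulVec]
  rfl

variable [Fintype m] [DecidableEq m]

/-- For `U` the rows `ι` of the identity matrix, `extendAlong U B` acts as `B` on the coordinates
`ι` and as the identity on the other coordinates. -/
def extendAlong (U : Matrix m n K) (B : Matrix m m K) : Matrix n n K :=
  1 + Uᵀ * (B - 1) * U

variable {U : Matrix m n K}

theorem extendAlong_mul (hU : U * Uᵀ = 1) (B B' : Matrix m m K) :
    extendAlong U (B * B') = extendAlong U B * extendAlong U B' := by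
  have hBB : B * B' - 1 = (B - 1) + (B' - 1) + (B - 1) * (B' - 1) := by noncomm_ring
  have hcross : Uᵀ * (B - 1) * U * (Uᵀ * (B' - 1) * U) = Uᵀ * ((B - 1) * (B' - 1)) * U := by
    simp only [Matrix.mul_assoc]
    rw [← Matrix.mul_assoc U, hU, Matrix.one_mul]
  simp only [extendAlong, hBB, Matrix.add_mul, Matrix.mul_add, Matrix.one_mul, Matrix.mul_one,
    hcross]
  abel

def extendAlongHom (hU : U * Uᵀ = 1) : Matrix m m K →* Matrix n n K where
  toFun := extendAlong U
  map_one' := by simp [extendAlong]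
  map_mul' := extendAlong_mul hU

theorem isUnit_extendAlong (hU : U * Uᵀ = 1) {B : Matrix m m K} (hB : IsUnit B) :
    IsUnit (extendAlong U B) :=
  hB.map (extendAlongHom hU)

theorem extendAlong_mul_transpose (hU : U * Uᵀ = 1) (B : Matrix m m K) :
    extendAlong U B * (extendAlong U B)ᵀ = 1 + Uᵀ * (B * Bᵀ - 1) * U := by
  have hT : (extendAlong U B)ᵀ = extendAlong U Bᵀ := by
    simp [extendAlong, transpose_mul, Matrix.mul_assoc]
  rw [hT, ← extendAlong_mul hU, extendAlong]

end Matrix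

section SmallMatrices

variable {K : Type*} [Field K]

theorem exists_isUnit_mul_transpose_sub_one_isUnit :
    ∃ B : Matrix (Fin 2) (Fin 2) K, IsUnit B ∧ IsUnit (B * Bᵀ - 1) := by
  refine ⟨!![1, 0; 1, 1], by simp [isUnit_iff_isUnit_det, det_fin_two_of], ?_⟩
  have hBB : (!![1, 0; 1, 1] : Matrix (Fin 2) (Fin 2) K) * (!![1, 0; 1, 1])ᵀ - 1 =
      !![0, 1; 1, 1] := by
    ext i j; fin_cases i <;> fin_cases j <;> simp [vecMul, dotProduct, Fin.sum_univ_succ]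
  rw [hBB]
  simp [isUnit_iff_isUnit_det, det_fin_two_of]

theorem exists_isUnit_mul_transpose_eq_one_add_mul (hchar : (2 : K) = 0 ∨ (3 : K) = 0) :
    ∃ (B : Matrix (Fin 3) (Fin 3) K) (w : Matrix (Fin 1) (Fin 3) K),
      IsUnit B ∧ B * Bᵀ = 1 + wᵀ * w ∧ w 0 0 = 1 := by
  rcases hchar with h2 | h3
  · refine ⟨!![0, 1, 1; 1, 0, 1; 1, 1, 1], !![1, 1, 0], ?_, ?_, rfl⟩
    · simp [Matrix.isUnit_iff_isUnit_det, det_fin_three]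
    · ext i j
      fin_cases i <;> fin_cases j <;> simp [Fin.sum_univ_succ, mul_apply, one_add_one_eq_two, h2]
  · refine ⟨!![1, 1, 0; 0, 1, 1; 1, 0, 1], !![1, 1, 1], ?_, ?_, rfl⟩
    · have h2 : (2 : K) ≠ 0 := fun h2 => one_ne_zero (by linear_combination h3 - h2 : (1 : K) = 0)
      simpa [isUnit_iff_isUnit_det, det_fin_three, one_add_one_eq_two] using h2
    · ext i j
      fin_cases i <;> fin_cases j <;> simp [Fin.sum_univ_succ, mul_apply]

end SmallMatrices

theorem mem_dualCode {R : Type*} [CommRing R] {n : ℕ} {C : Submodule R (Fin n → R)}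
    {v : Fin n → R} : v ∈ dualCode C ↔ ∀ w ∈ C, v ⬝ᵥ w = 0 :=
  Iff.rfl

namespace Submodule

variable {R : Type*} [CommRing R] {n : ℕ}

def hull (C : Submodule R (Fin n → R)) : Submodule R (Fin n → R) :=
  C ⊓ dualCode C

theorem hull_map_vecMulLinear (C : Submodule R (Fin n → R)) (P : Matrix (Fin n) (Fin n) R) :
    (C.map P.vecMulLinear).hull =
      (C ⊓ (dualCode C).comap (P * Pᵀ).vecMulLinear).map P.vecMulLinear := by
  ext x
  simp only [hull, mem_inf, mem_map, mem_dualCode, mem_comap, vecMulLinear_apply]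
  constructor
  · rintro ⟨⟨v, hv, rfl⟩, hd⟩
    exact ⟨v, ⟨hv, fun w hw => vecMul_dotProduct_vecMul v w P ▸ hd _ ⟨w, hw, rfl⟩⟩, rfl⟩
  · rintro ⟨v, ⟨hv, hd⟩, rfl⟩
    refine ⟨⟨v, hv, rfl⟩, ?_⟩
    rintro _ ⟨w, hw, rfl⟩
    rw [vecMul_dotProduct_vecMul]
    exact hd w hw

theorem inf_comap_one_add_eq {r : ℕ} (C : Submodule R (Fin n → R))
    (V : Matrix (Fin r) (Fin n) R) {G : Matrix (Fin r) (Fin r) R} (hG : IsUnit G)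
    (hV : C.hull.map V.mulVecLin = ⊤) :
    C ⊓ (dualCode C).comap (1 + Vᵀ * G * V).vecMulLinear =
      C.hull ⊓ LinearMap.ker V.mulVecLin := by
  ext v
  simp only [hull, mem_inf, mem_comap, vecMulLinear_apply, LinearMap.mem_ker, mulVecLin_apply,
    vecMul_one_add_transpose_mul_mul]
  constructor
  · rintro ⟨hvC, hvS⟩
    have hy : (V *ᵥ v) ᵥ* G = 0 := by
      refine dotProduct_eq_zero _ fun z => ?_
      obtain ⟨x, ⟨hxC, hxD⟩, rfl⟩ : z ∈ C.hull.map V.mulVecLin := hV ▸ mem_top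
      have hvx := hvS x hxC
      rwa [add_dotProduct, dotProduct_comm, hxD v hvC, zero_add, ← dotProduct_mulVec] at hvx
    have hVv : V *ᵥ v = 0 := vecMul_injective_of_isUnit hG (hy.trans (zero_vecMul G).symm)
    rw [hy, zero_vecMul, add_zero] at hvS
    exact ⟨⟨hvC, hvS⟩, hVv⟩
  · rintro ⟨⟨hvC, hvD⟩, hVv⟩
    rw [hVv, zero_vecMul, zero_vecMul, add_zero]
    exact ⟨hvC, hvD⟩

end Submodule

namespace Submodule

variable {Fq F : Type*} [Field Fq] [Field F] [Algebra Fq F] {n : ℕ}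

theorem map_rightMulCode_mul (C : Submodule F (Fin n → F))
    (A B : Matrix (Fin n) (Fin n) Fq) :
    C.map (rightMulCode (A * B)) = (C.map (rightMulCode A)).map (rightMulCode B) := by
  rw [← map_comp]
  congr 1
  refine LinearMap.ext fun v => ?_
  simp [rightMulCode, Matrix.map_mul, vecMul_vecMul]

theorem finrank_hull_map_rightMulCode_add {s : ℕ} (C : Submodule F (Fin n → F))
    {A : Matrix (Fin n) (Fin n) Fq} (hA : IsUnit A) (V : Matrix (Fin s) (Fin n) Fq)
    {G : Matrix (Fin s) (Fin s) Fq} (hG : IsUnit G) (hAA : A * Aᵀ = 1 + Vᵀ * G * V)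
    (hV : C.hull.map (V.map (algebraMap Fq F)).mulVecLin = ⊤) :
    finrank F (C.map (rightMulCode A)).hull + s = finrank F C.hull := by
  have hPP : A.map (algebraMap Fq F) * (A.map (algebraMap Fq F))ᵀ =
      1 + (V.map (algebraMap Fq F))ᵀ * G.map (algebraMap Fq F) * V.map (algebraMap Fq F) := by
    rw [← transpose_map, ← Matrix.map_mul, hAA]
    simp [Matrix.map_mul, Matrix.map_add, transpose_map]
  have hinj : Function.Injective (A.map (algebraMap Fq F)).vecMulLinear :=
    vecMul_injective_iff_isUnit.mpr (hA.map (algebraMap Fq F).mapMatrix)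
  have hG' : IsUnit (G.map (algebraMap Fq F)) := hG.map (algebraMap Fq F).mapMatrix
  rw [rightMulCode, hull_map_vecMulLinear, hPP, inf_comap_one_add_eq C _ hG' hV,
    ← (equivMapOfInjective _ hinj _).finrank_eq,
    ← C.hull.finrank_map_add_finrank_inf_ker (V.map (algebraMap Fq F)).mulVecLin, hV,
    finrank_top, finrank_fin_fun, add_comm]

theorem exists_finrank_hull_map_add {r s : ℕ} (C : Submodule F (Fin n → F))
    {ι : Fin r → Fin n} (hι : Function.Injective ι) {B : Matrix (Fin r) (Fin r) Fq}
    (hB : IsUnit B) (M : Matrix (Fin s) (Fin r) Fq) {G : Matrix (Fin s) (Fin s) Fq}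
    (hG : IsUnit G) (hBB : B * Bᵀ = 1 + Mᵀ * G * M)
    (hM : ∀ y, ∃ x ∈ C.hull, M.map (algebraMap Fq F) *ᵥ (x ∘ ι) = y) :
    ∃ A : Matrix (Fin n) (Fin n) Fq, IsUnit A ∧
      finrank F (C.map (rightMulCode A)).hull + s = finrank F C.hull := by
  have hU := mul_transpose_submatrix_one (K := Fq) hι
  have hA := isUnit_extendAlong hU hB
  refine ⟨_, hA, C.finrank_hull_map_rightMulCode_add hA
    (M * (1 : Matrix _ _ Fq).submatrix ι id) hG ?_ (eq_top_iff.mpr fun y _ => ?_)⟩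
  · rw [extendAlong_mul_transpose hU, hBB, add_sub_cancel_left]
    simp only [transpose_mul, Matrix.mul_assoc]
  · obtain ⟨x, hx, rfl⟩ := hM y
    refine ⟨x, hx, ?_⟩
    rw [mulVecLin_apply, Matrix.map_mul, ← mulVec_mulVec, ← submatrix_map,
      Matrix.map_one _ (map_zero _) (map_one _), submatrix_one_mulVec]

theorem exists_finrank_hull_add_two (C : Submodule F (Fin n → F))
    (h2 : 2 ≤ finrank F C.hull) :
    ∃ A : Matrix (Fin n) (Fin n) Fq, IsUnit A ∧
      finrank F (C.map (rightMulCode A)).hull + 2 = finrank F C.hull := by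
  obtain ⟨B, hB, hG⟩ := exists_isUnit_mul_transpose_sub_one_isUnit (K := Fq)
  obtain ⟨ι, hι, hsurj⟩ := C.hull.exists_coord_pair_surjective h2
  exact C.exists_finrank_hull_map_add hι hB 1 hG (by simp) (by simpa using hsurj)

theorem exists_finrank_hull_add_one (hchar : (2 : Fq) = 0 ∨ (3 : Fq) = 0)
    (C : Submodule F (Fin n → F)) (h3 : 3 ≤ finrank F C.hull) :
    ∃ A : Matrix (Fin n) (Fin n) Fq, IsUnit A ∧
      finrank F (C.map (rightMulCode A)).hull + 1 = finrank F C.hull := by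
  obtain ⟨B, w, hB, hBB, hw⟩ := exists_isUnit_mul_transpose_eq_one_add_mul hchar
  obtain ⟨ι, hι, x, hx, hx0, hx1, hx2⟩ := C.hull.exists_coord_triple h3
  refine C.exists_finrank_hull_map_add hι hB w isUnit_one
    (by rwa [Matrix.mul_one]) fun y => ?_
  refine ⟨(y 0 / x (ι 0)) • x, C.hull.smul_mem _ hx, funext fun i => ?_⟩
  fin_cases i
  simp [mulVec, dotProduct, Fin.sum_univ_three, hx1, hx2, hw, hx0]

theorem exists_finrank_hull_eq (hchar : (2 : Fq) = 0 ∨ (3 : Fq) = 0)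
    (C : Submodule F (Fin n → F)) {ℓ : ℕ} (hℓ : ℓ + 2 ≤ finrank F C.hull) :
    ∃ A : Matrix (Fin n) (Fin n) Fq, IsUnit A ∧ finrank F (C.map (rightMulCode A)).hull = ℓ := by
  obtain ⟨d, hd⟩ := Nat.exists_eq_add_of_le hℓ
  induction d generalizing C with
  | zero =>
    obtain ⟨A, hA, hdrop⟩ := C.exists_finrank_hull_add_two (Fq := Fq) (by omega)
    exact ⟨A, hA, by omega⟩
  | succ d ih =>
    obtain ⟨A₁, hA₁, hdrop⟩ := C.exists_finrank_hull_add_one hchar (by omega)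
    obtain ⟨A₂, hA₂, hA₂ℓ⟩ := ih (C.map (rightMulCode A₁)) (by omega) (by omega)
    exact ⟨A₁ * A₂, hA₁.mul hA₂, by rwa [map_rightMulCode_mul]⟩

end Submodule

theorem hull_reduction_q_two_three_general {Fq F : Type*} [Field Fq] [Field F]
    [Fintype Fq] [Algebra Fq F]
    (hq : Fintype.card Fq = 2 ∨ Fintype.card Fq = 3)
    {n h : ℕ} (C : Submodule F (Fin n → F))
    (hh : Module.finrank F ↥(C ⊓ dualCode C) = h) (h2 : 2 ≤ h)
    (ℓ : ℕ) (hℓ : ℓ ≤ h - 2) :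
    ∃ A : Matrix (Fin n) (Fin n) Fq, IsUnit A ∧
      Module.finrank F ↥(C.map (rightMulCode A) ⊓ dualCode (C.map (rightMulCode A))) = ℓ := by
  have hchar : (2 : Fq) = 0 ∨ (3 : Fq) = 0 := by
    have hcard := FiniteField.cast_card_eq_zero Fq
    rcases hq with hq | hq <;> rw [hq] at hcard
    exacts [Or.inl (by exact_mod_cast hcard), Or.inr (by exact_mod_cast hcard)]
  have hℓh : ℓ + 2 ≤ finrank F ↥(C ⊓ dualCode C) := by omega
  exact C.exists_finrank_hull_eq hchar hℓh

/-- Theorem 3.4(2): hull reduction for `q ∈ {2,3}` and hull dimension `h ≥ 2`. -/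
theorem hull_reduction_q_two_three {Fq F : Type*} [Field Fq] [Field F]
    [Fintype Fq] [Fintype F] [Algebra Fq F]
    (hq : Fintype.card Fq = 2 ∨ Fintype.card Fq = 3)
    {n k h : ℕ} (C : Submodule F (Fin n → F)) (hk : Module.finrank F C = k)
    (hh : Module.finrank F ↥(C ⊓ dualCode C) = h) (h2 : 2 ≤ h)
    (ℓ : ℕ) (hℓ : ℓ ≤ h - 2) :
    ∃ A : Matrix (Fin n) (Fin n) Fq, IsUnit A ∧
      Module.finrank F ↥(C.map (rightMulCode A) ⊓ dualCode (C.map (rightMulCode A))) = ℓ :=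
  hull_reduction_q_two_three_general hq C hh h2 ℓ hℓ
end

section
/- Let q ∈ {2,3} and C ⊆ F_{q^m}^n a k-dimensional F_{q^m}-subspace with dim(C ∩ C^⊥) = 1. Then there exists A ∈ GL_n(F_q) such that C' = {vA : v ∈ C} satisfies C' ∩ C'^⊥ = {0}. -/
open Matrix

/-!
Let the hull of `C` be spanned by `x`, with `x i ≠ 0`. Adding `ε` times coordinate `i` to
coordinate `t` (a transvection with `ε = ±1`, defined over every subfield) perturbs the form
`v ⬝ᵥ u` on `C` only through the coordinates `i` and `t`. The functional
`u ↦ u t - x t / x i * u i` vanishes on the hull, so it is `w t ⬝ᵥ ·` for some `w t ∈ C`, and the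
transformed code is LCD unless `ε * (w t ⬝ᵥ w t - 1) * x i = 2 * x t`.
If this identity held for all `t ≠ i` and both signs, then in characteristic 3 the two signs
give `x t = 0` for `t ≠ i`, so `x ⬝ᵥ x = x i ^ 2 ≠ 0`; in characteristic 2 all `w t ⬝ᵥ w t = 1`,
and since `v ↦ v ⬝ᵥ v` is additive the hull vector `∑ t ≠ i, x t • w t` has self product
`∑ t ≠ i, x t ^ 2 = x i ^ 2 ≠ 0`. Either way `x` would not be self-orthogonal.
-/


section

variable {F : Type*} [Field F] {n : ℕ}

/-- Linear complementary dual code. -/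
def IsLCD (C : Submodule F (Fin n → F)) : Prop :=
  C ⊓ dualCode C = ⊥

theorem LinearMap.mem_range_of_ker_le_of_symm {K V : Type*} [Field K] [AddCommGroup V]
    [Module K V] [FiniteDimensional K V] {B : V →ₗ[K] V →ₗ[K] K}
    (hB : ∀ v w, B v w = B w v) {φ : Module.Dual K V} (hφ : LinearMap.ker B ≤ LinearMap.ker φ) :
    φ ∈ LinearMap.range B := by
  have hφ' : φ ∈ LinearMap.range B.dualMap := by
    rw [LinearMap.range_dualMap_eq_dualAnnihilator_ker, Submodule.mem_dualAnnihilator]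
    exact fun v hv => hφ hv
  obtain ⟨g, rfl⟩ := hφ'
  obtain ⟨w, rfl⟩ := (Module.evalEquiv K V).surjective g
  exact ⟨w, LinearMap.ext fun v => hB w v⟩

theorem exists_mem_dotProduct_eq {C : Submodule F (Fin n → F)} (φ : (Fin n → F) →ₗ[F] F)
    (hφ : ∀ v ∈ C ⊓ dualCode C, φ v = 0) : ∃ w ∈ C, ∀ u ∈ C, w ⬝ᵥ u = φ u := by
  let B : C →ₗ[F] C →ₗ[F] F := (dotProductBilin F F).compl₁₂ C.subtype C.subtype
  obtain ⟨w, hw⟩ : φ.comp C.subtype ∈ LinearMap.range B := by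
    refine LinearMap.mem_range_of_ker_le_of_symm (B := B)
      (fun v u => dotProduct_comm (v : Fin n → F) u) fun v hv => ?_
    exact hφ v ⟨v.2, fun u hu => LinearMap.congr_fun hv ⟨u, hu⟩⟩
  exact ⟨w, w.2, fun u hu => LinearMap.congr_fun hw ⟨u, hu⟩⟩

theorem vecMul_transvection (v : Fin n → F) (i t : Fin n) (γ : F) :
    v ᵥ* transvection i t γ = v + Pi.single t (γ * v i) := by
  rw [transvection, vecMul_add, vecMul_one]
  congr 1
  ext s
  rcases eq_or_ne s t with rfl | hs
  · simp [vecMul, dotProduct, Matrix.single_apply, mul_comm]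
  · simp [vecMul, dotProduct, hs, hs.symm]

theorem rightMulCode_transvection {Fq : Type*} [Field Fq] [Algebra Fq F] (i t : Fin n) (c : Fq) :
    (rightMulCode (transvection i t c) : (Fin n → F) →ₗ[F] _) =
      (transvection i t (algebraMap Fq F c)).vecMulLinear := by
  rw [rightMulCode, transvection, transvection, Matrix.map_add _ (map_add _),
    Matrix.map_one _ (map_zero _) (map_one _), map_single]

namespace HullDimOne

theorem isLCD_map_transvection {C : Submodule F (Fin n → F)} {x w : Fin n → F} {i t : Fin n}
    {γ : F} (hhull : C ⊓ dualCode C = F ∙ x) (hxi : x i ≠ 0) (hwC : w ∈ C)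
    (hw : ∀ u ∈ C, w ⬝ᵥ u = u t - x t / x i * u i) (hγ : γ ≠ 0)
    (hE : γ * (w ⬝ᵥ w - 1) * x i ≠ 2 * x t) :
    IsLCD (C.map (transvection i t γ).vecMulLinear) := by
  obtain ⟨hxC, hxperp⟩ : x ∈ C ⊓ dualCode C := hhull ▸ Submodule.mem_span_singleton_self x
  rw [IsLCD, Submodule.eq_bot_iff]
  rintro _ ⟨⟨v, hvC, rfl⟩, hperp⟩
  have hrel : ∀ u ∈ C, v ⬝ᵥ u + γ * v i * u t + γ * u i * v t + γ ^ 2 * v i * u i = 0 := by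
    intro u hu
    have := hperp _ ⟨u, hu, rfl⟩
    simp only [vecMulLinear_apply, vecMul_transvection, add_dotProduct, dotProduct_add,
      single_dotProduct, dotProduct_single, Pi.add_apply, Pi.single_eq_same] at this
    linear_combination this
  have hK : γ * v t + γ ^ 2 * v i + γ * v i * (x t / x i) = 0 := by
    have h := hrel x hxC
    rw [dotProduct_comm, hxperp v hvC] at h
    field_simp
    linear_combination h
  have hv' : v + (γ * v i) • w ∈ F ∙ x := by
    rw [← hhull]
    refine ⟨C.add_mem hvC (C.smul_mem _ hwC), fun u hu => ?_⟩
    rw [add_dotProduct, smul_dotProduct, hw u hu, smul_eq_mul]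
    linear_combination hrel u hu - u i * hK
  obtain ⟨μ, hμ⟩ := Submodule.mem_span_singleton.1 hv'
  have hwx : w ⬝ᵥ x = 0 := by rw [hw x hxC]; field_simp; ring
  have hvt : v t - x t / x i * v i + γ * v i * (w ⬝ᵥ w) = 0 := by
    have h := congrArg (w ⬝ᵥ ·) hμ
    simp only [dotProduct_smul, dotProduct_add, hwx, hw v hvC, smul_eq_mul] at h
    linear_combination -h
  have hvi : v i = 0 := by
    have hr : x t / x i * x i = x t := div_mul_cancel₀ _ hxi
    have h : γ * v i * (2 * x t - γ * (w ⬝ᵥ w - 1) * x i) = 0 := by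
      linear_combination x i * (hK - γ * hvt) - 2 * γ * v i * hr
    simpa [hγ, sub_eq_zero, Ne.symm hE] using h
  obtain rfl : μ = 0 := by
    have := congrFun hμ i
    simpa [hvi, hxi] using this
  obtain rfl : v = 0 := by simpa [hvi] using hμ.symm
  simp

end HullDimOne

theorem sum_smul_dotProduct_self_of_two_eq_zero {ι : Type*} (h2 : (2 : F) = 0) (s : Finset ι)
    (c : ι → F) (v : ι → Fin n → F) :
    (∑ t ∈ s, c t • v t) ⬝ᵥ (∑ t ∈ s, c t • v t) = ∑ t ∈ s, c t ^ 2 * (v t ⬝ᵥ v t) := by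
  classical
  induction s using Finset.induction_on with
  | empty => simp
  | insert j s hj ih =>
    rw [Finset.sum_insert hj, Finset.sum_insert hj, add_dotProduct, dotProduct_add,
      dotProduct_add, ih, dotProduct_comm (∑ t ∈ s, c t • v t)]
    simp only [smul_dotProduct, dotProduct_smul, smul_eq_mul]
    linear_combination c j * (v j ⬝ᵥ ∑ t ∈ s, c t • v t) * h2

namespace HullDimOne

theorem false_of_two_eq_zero {C : Submodule F (Fin n → F)} {x : Fin n → F} {i : Fin n}
    {w : Fin n → Fin n → F} (h2 : (2 : F) = 0) (hx : x ∈ C ⊓ dualCode C) (hxi : x i ≠ 0)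
    (hwC : ∀ t, w t ∈ C) (hw : ∀ t, ∀ u ∈ C, w t ⬝ᵥ u = u t - x t / x i * u i)
    (hww : ∀ t ≠ i, (w t ⬝ᵥ w t - 1) * x i = 2 * x t) : False := by
  obtain ⟨hxC, hxperp⟩ := hx
  set W := ∑ t ∈ Finset.univ.erase i, x t • w t
  have hWperp : ∀ u ∈ C, W ⬝ᵥ u = 0 := by
    intro u hu
    have hi : x i * (u i - x i / x i * u i) = 0 := by field_simp; ring
    have hsum : ∑ t, x t * (u t - x t / x i * u i) = x ⬝ᵥ u - x ⬝ᵥ x / x i * u i := by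
      simp only [dotProduct, mul_sub, Finset.sum_sub_distrib, Finset.sum_div, Finset.sum_mul]
      exact congrArg _ (Finset.sum_congr rfl fun t _ => by ring)
    rw [sum_dotProduct]
    simp only [smul_dotProduct, hw _ u hu, smul_eq_mul]
    rw [Finset.sum_erase (f := fun t => x t * (u t - x t / x i * u i)) _ hi, hsum,
      hxperp u hu, hxperp x hxC, zero_div, zero_mul, sub_zero]
  have hWW : W ⬝ᵥ W = -x i ^ 2 := by
    have hw1 : ∀ t ≠ i, w t ⬝ᵥ w t = 1 := fun t ht => by
      have := hww t ht
      rw [h2, zero_mul, mul_eq_zero, sub_eq_zero] at this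
      exact this.resolve_right hxi
    have hxx : ∑ t, x t ^ 2 = 0 := by simpa [dotProduct, sq] using hxperp x hxC
    rw [sum_smul_dotProduct_self_of_two_eq_zero h2,
      Finset.sum_congr rfl fun t ht => by rw [hw1 t (Finset.ne_of_mem_erase ht), mul_one],
      Finset.sum_erase_eq_sub (Finset.mem_univ i), hxx, zero_sub]
  have := hWperp W (C.sum_mem fun t _ => C.smul_mem _ (hwC t))
  exact hxi (pow_eq_zero_iff two_ne_zero |>.1 (neg_eq_zero.1 (hWW.symm.trans this)))

theorem false_of_three_eq_zero {x a : Fin n → F} {i : Fin n} (h3 : (3 : F) = 0)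
    (hxx : x ⬝ᵥ x = 0) (hxi : x i ≠ 0)
    (h : ∀ t ≠ i, ∀ ε : F, (ε = 1 ∨ ε = -1) → ε * a t * x i = 2 * x t) : False := by
  have hxt : ∀ t ≠ i, x t = 0 := fun t ht => by
    linear_combination -(h t ht 1 (.inl rfl) + h t ht (-1) (.inr rfl)) - x t * h3
  have : x ⬝ᵥ x = x i * x i := Fintype.sum_eq_single i fun t ht => by simp [hxt t ht]
  exact hxi (mul_self_eq_zero.1 (this.symm.trans hxx))

theorem exists_isLCD_map_transvection {C : Submodule F (Fin n → F)}
    (hchar : (2 : F) = 0 ∨ (3 : F) = 0) (hh : Module.finrank F ↥(C ⊓ dualCode C) = 1) :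
    ∃ i t : Fin n, i ≠ t ∧ ∃ ε : F, (ε = 1 ∨ ε = -1) ∧
      IsLCD (C.map (transvection i t ε).vecMulLinear) := by
  obtain ⟨x, hx0, hhull⟩ :=
    (atom_iff_nonzero_span _).1 (Submodule.isAtom_iff_finrank_eq_one.2 hh)
  have hx : x ∈ C ⊓ dualCode C := hhull ▸ Submodule.mem_span_singleton_self x
  obtain ⟨i, hxi⟩ : ∃ i, x i ≠ 0 := Function.ne_iff.1 hx0
  have hrepr : ∀ t, ∃ w ∈ C, ∀ u ∈ C, w ⬝ᵥ u = u t - x t / x i * u i := fun t =>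
    exists_mem_dotProduct_eq (LinearMap.proj t - (x t / x i) • LinearMap.proj i) fun v hv => by
      obtain ⟨μ, rfl⟩ := Submodule.mem_span_singleton.1 (hhull ▸ hv)
      rw [map_smul, LinearMap.sub_apply, LinearMap.smul_apply, LinearMap.proj_apply,
        LinearMap.proj_apply, smul_eq_mul, smul_eq_mul, div_mul_cancel₀ _ hxi, sub_self, mul_zero]
  choose w hwC hw using hrepr
  by_contra! hcon
  have hbad : ∀ t ≠ i, ∀ ε : F, (ε = 1 ∨ ε = -1) → ε * (w t ⬝ᵥ w t - 1) * x i = 2 * x t :=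
    fun t ht ε hε => by_contra fun hE => hcon i t (Ne.symm ht) ε hε <|
      isLCD_map_transvection hhull hxi (hwC t) (hw t) (by rcases hε with rfl | rfl <;> simp) hE
  rcases hchar with h2 | h3
  · exact false_of_two_eq_zero h2 hx hxi hwC hw fun t ht => by simpa using hbad t ht 1 (.inl rfl)
  · exact false_of_three_eq_zero h3 (hx.2 x hx.1) hxi hbad

end HullDimOne

end

theorem hull_one_equiv_LCD_general {Fq F : Type*} [Field Fq] [Field F]
    [Fintype Fq] [Algebra Fq F]
    (hq : Fintype.card Fq = 2 ∨ Fintype.card Fq = 3)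
    {n : ℕ} (C : Submodule F (Fin n → F))
    (hh : Module.finrank F ↥(C ⊓ dualCode C) = 1) :
    ∃ A : Matrix (Fin n) (Fin n) Fq, IsUnit A ∧
      C.map (rightMulCode A) ⊓ dualCode (C.map (rightMulCode A)) = ⊥ := by
  have hcard : (Fintype.card Fq : F) = 0 := by
    rw [← map_natCast (algebraMap Fq F), FiniteField.cast_card_eq_zero, map_zero]
  have hchar : (2 : F) = 0 ∨ (3 : F) = 0 :=
    hq.imp (fun h => by simpa [h] using hcard) (fun h => by simpa [h] using hcard)
  obtain ⟨i, t, hit, ε, hε, hLCD⟩ := HullDimOne.exists_isLCD_map_transvection hchar hh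
  obtain ⟨c, rfl⟩ : ∃ c : Fq, algebraMap Fq F c = ε := by
    rcases hε with rfl | rfl
    exacts [⟨1, map_one _⟩, ⟨-1, by simp⟩]
  refine ⟨transvection i t c, ?_, ?_⟩
  · rw [isUnit_iff_isUnit_det, det_transvection_of_ne _ _ hit]
    exact isUnit_one
  · rw [rightMulCode_transvection]
    exact hLCD

/-- Theorem 3.6: for `q ∈ {2,3}` and hull dimension 1, there is an equivalent
LCD code. -/
theorem hull_one_equiv_LCD {Fq F : Type*} [Field Fq] [Field F]
    [Fintype Fq] [Fintype F] [Algebra Fq F]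
    (hq : Fintype.card Fq = 2 ∨ Fintype.card Fq = 3)
    {n k : ℕ} (C : Submodule F (Fin n → F)) (hk : Module.finrank F C = k)
    (hh : Module.finrank F ↥(C ⊓ dualCode C) = 1) :
    ∃ A : Matrix (Fin n) (Fin n) Fq, IsUnit A ∧
      C.map (rightMulCode A) ⊓ dualCode (C.map (rightMulCode A)) = ⊥ :=
  hull_one_equiv_LCD_general hq C hh
end

section
/- Let F be a field with char F = 2, and let A ∈ F^{1×(n−1)}, B ∈ F^{(k−1)×(n−1)} satisfy A·A^T = 1, A·B^T = 0, and S := B·B^T invertible. Let Q = I_{n−1} − B^T S^{−1} B. Then A·Q·A^T = 1, and in particular some diagonal entry of Q is nonzero. -/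
open Matrix

theorem AQ_Atranspose_eq_one {F : Type*} [Field F] (hF : ringChar F = 2)
    {n k : ℕ} (A : Matrix (Fin 1) (Fin n) F) (B : Matrix (Fin k) (Fin n) F)
    (hA : A * Aᵀ = 1) (hAB : A * Bᵀ = 0) (hS : IsUnit (B * Bᵀ))
    (Q : Matrix (Fin n) (Fin n) F) (hQ : Q = 1 - Bᵀ * (B * Bᵀ)⁻¹ * B) :
    A * Q * Aᵀ = 1 ∧ ∃ i, Q i i ≠ 0 := by
  haveI : CharP F 2 := hF ▸ ringChar.charP F
  have h2 : (2 : F) = 0 := CharP.cast_eq_zero F 2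
  have hBA : B * Aᵀ = 0 := by
    have := congrArg Matrix.transpose hAB
    simpa using this
  have hmain : A * Q * Aᵀ = 1 := by
    subst hQ
    rw [Matrix.mul_sub, Matrix.sub_mul, Matrix.mul_one, hA]
    have : A * (Bᵀ * (B * Bᵀ)⁻¹ * B) * Aᵀ = 0 := by
      rw [← Matrix.mul_assoc, ← Matrix.mul_assoc, hAB, Matrix.zero_mul,
        Matrix.zero_mul, Matrix.zero_mul]
    rw [this, sub_zero]
  refine ⟨hmain, ?_⟩
  -- Q is symmetric
  have hQsymm : ∀ i j, Q j i = Q i j := by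
    intro i j
    have hQT : Qᵀ = Q := by
      subst hQ
      simp only [Matrix.transpose_sub, Matrix.transpose_one, Matrix.transpose_mul,
        Matrix.transpose_transpose, Matrix.transpose_nonsing_inv]
      rw [Matrix.mul_assoc]
    exact congrFun (congrFun hQT i) j
  by_contra h
  push_neg at h
  have hentry : (A * Q * Aᵀ) 0 0 = ∑ p ∈ Finset.univ ×ˢ Finset.univ,
      A 0 p.1 * Q p.1 p.2 * A 0 p.2 := by
    rw [Finset.sum_product]
    simp [Matrix.mul_apply, Finset.sum_mul, Finset.mul_sum, mul_assoc]
    rw [Finset.sum_comm]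
  have hzero : (∑ p ∈ Finset.univ ×ˢ Finset.univ,
      A 0 p.1 * Q p.1 p.2 * A 0 p.2 : F) = 0 := by
    apply Finset.sum_involution (fun p _ => (p.2, p.1))
    · intro ⟨i, j⟩ _
      simp only
      rw [hQsymm i j,
        show A 0 j * Q i j * A 0 i = A 0 i * Q i j * A 0 j by ring, ← two_mul, h2,
        zero_mul]
    · rintro ⟨i, j⟩ _ hne heq
      rw [Prod.mk.injEq] at heq
      obtain ⟨h1, -⟩ := heq
      apply hne
      show A 0 i * Q i j * A 0 j = 0
      have hj : j = i := h1
      rw [hj, h i]; ring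
    · intro p _; exact Finset.mem_product.mpr ⟨Finset.mem_univ _, Finset.mem_univ _⟩
    · intro p _; rfl
  rw [hmain, hzero] at hentry
  simp [Matrix.one_apply] at hentry
end
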